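/- arXiv:math/0006016 — 2 statements merged into one kernel-verified Lean document; each statement's English description precedes it below -/
import Mathlib

section
/- Let Ω⊂ℝⁿ be a bounded open set, β>0, let g:Ω→ℝ be bounded and continuous, and let u∈C²(Ω) be bounded with bounded gradient and satisfy Δu = β(u−g) on Ω. Set m:=inf_Ω u, M:=sup_Ω u and define φ:Ω×ℝ→ℝⁿ×ℝ by: φ(x,t):=(0, β|m/2−u(x)/2|² − β|m/2+u(x)/2−g(x)|²) if t−u(x)/2 < m/2; φ(x,t):=(2∇u(x), |∇u(x)|² − β|t−g(x)|² + β|t−u(x)|²) if m/2 ≤ t−u(x)/2 ≤ M/2; φ(x,t):=(0, β|M/2−u(x)/2|² − β|M/2+u(x)/2−g(x)|²) if t−u(x)/2 > M/2. Then φ is divergence-free in the distributional sense: ∫_{Ω×ℝ} φ(x,t)·∇_{(x,t)}ψ(x,t) dx dt = 0 for every ψ∈C_c^∞(Ω×ℝ). -/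
open MeasureTheory Set Filter
open scoped RealInnerProductSpace

/-- Glue: continuous on open `U`, zero on open `V`, covering. -/
lemma auxGlue_cont {X Y : Type*} [TopologicalSpace X] [TopologicalSpace Y] [Zero Y]
    {f : X → Y} {U V : Set X} (hU : IsOpen U) (hV : IsOpen V)
    (hf : ContinuousOn f U) (h0 : ∀ x ∈ V, f x = 0) (hcov : ∀ x, x ∈ U ∨ x ∈ V) :
    Continuous f := by
  rw [continuous_iff_continuousAt]
  intro x
  rcases hcov x with hx | hx
  · exact hf.continuousAt (hU.mem_nhds hx)
  · have : f =ᶠ[nhds x] (fun _ => 0) :=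
      Filter.eventually_of_mem (hV.mem_nhds hx) (fun y hy => h0 y hy)
    exact ContinuousAt.congr continuousAt_const this.symm

/-- Glue: C¹ on open `U`, zero on open `V`, covering. -/
lemma auxGlue_contDiff {E F : Type*} [NormedAddCommGroup E] [NormedSpace ℝ E]
    [NormedAddCommGroup F] [NormedSpace ℝ F]
    {f : E → F} {U V : Set E} (hU : IsOpen U) (hV : IsOpen V)
    (hf : ContDiffOn ℝ 1 f U) (h0 : ∀ x ∈ V, f x = 0) (hcov : ∀ x, x ∈ U ∨ x ∈ V) :
    ContDiff ℝ 1 f := by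
  apply contDiff_iff_contDiffAt.2
  intro x
  rcases hcov x with hx | hx
  · exact hf.contDiffAt (hU.mem_nhds hx)
  · have : (fun _ => (0 : F)) =ᶠ[nhds x] f :=
      (Filter.eventually_of_mem (hV.mem_nhds hx) (fun y hy => (h0 y hy).symm))
    exact contDiffAt_const.congr_of_eventuallyEq this.symm

/-- Integral of a directional derivative of a compactly supported C¹ function is zero. -/
lemma auxIntegral_fderiv_eq_zero {E : Type*} [NormedAddCommGroup E] [NormedSpace ℝ E]
    [FiniteDimensional ℝ E] [MeasurableSpace E] [BorelSpace E]
    (μ : Measure E) [μ.IsAddHaarMeasure] {f : E → ℝ} (hf : ContDiff ℝ 1 f)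
    (hsupp : HasCompactSupport f) (v : E) :
    ∫ x, fderiv ℝ f x v ∂μ = 0 := by
  have h1 : Integrable (fun x => fderiv ℝ f x v) μ := by
    have hc : Continuous fun x => fderiv ℝ f x v :=
      (ContinuousLinearMap.apply ℝ ℝ v).continuous.comp (hf.continuous_fderiv one_ne_zero)
    exact hc.integrable_of_hasCompactSupport (hsupp.fderiv_apply ℝ v)
  have h2 : Integrable f μ := hf.continuous.integrable_of_hasCompactSupport hsupp
  have := integral_mul_fderiv_eq_neg_fderiv_mul_of_integrable
    (μ := μ) (f := fun _ : E => (1:ℝ)) (g := f) (v := v)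
    (by simpa using (integrable_zero E ℝ μ)) (by simpa using h1) (by simpa using h2)
    (fun x _ => differentiableAt_const 1) (fun x _ => hf.differentiable one_ne_zero x)
  simpa using this

/-- 1D piecewise integration by parts. -/
lemma aux1d {χ χ' : ℝ → ℝ} {a b cm k R : ℝ}
    (hd : ∀ s, HasDerivAt χ (χ' s) s) (hc : Continuous χ')
    (hRa : -R ≤ a) (hab : a ≤ b) (hbR : b ≤ R)
    (hvan : ∀ s ∉ Set.Icc (-R) R, χ' s = 0)
    (hm : χ (-R) = 0) (hp : χ R = 0) :
    (∫ s, χ' s * (if s < a then cm else if s ≤ b then cm + k * (s - a) else cm + k * (b - a)))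
      = -(k * ∫ s in a..b, χ s) := by
  set L : ℝ → ℝ := fun s => if s < a then cm else if s ≤ b then cm + k * (s - a)
    else cm + k * (b - a) with hL
  have hχcont : Continuous χ :=
    continuous_iff_continuousAt.2 fun s => (hd s).differentiableAt.continuousAt
  have hχ'int : Integrable χ' :=
    hc.integrable_of_hasCompactSupport (HasCompactSupport.intro isCompact_Icc hvan)
  have hstep1 : (∫ s, χ' s * L s) = ∫ s in Set.Icc (-R) R, χ' s * L s :=
    (setIntegral_eq_integral_of_forall_compl_eq_zero
      (fun s hs => by rw [hvan s hs, zero_mul])).symm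
  have hRR : -R ≤ R := le_trans hRa (le_trans hab hbR)
  have hstep2 : (∫ s in Set.Icc (-R) R, χ' s * L s) = ∫ s in (-R)..R, χ' s * L s := by
    rw [integral_Icc_eq_integral_Ioc, ← intervalIntegral.integral_of_le hRR]
  -- continuous versions on pieces
  have hconta : Continuous fun s => χ' s * cm := hc.mul continuous_const
  have hcontm : Continuous fun s => χ' s * (cm + k * (s - a)) :=
    hc.mul (continuous_const.add (continuous_const.mul (continuous_id.sub continuous_const)))
  have hcontb : Continuous fun s => χ' s * (cm + k * (b - a)) := hc.mul continuous_const
  have heq1 : Set.EqOn (fun s => χ' s * L s) (fun s => χ' s * cm) (Set.uIcc (-R) a) := by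
    intro s hs
    rw [Set.uIcc_of_le hRa] at hs
    rcases lt_or_eq_of_le hs.2 with h | h
    · simp only [hL, if_pos h]
    · subst h
      show χ' s * L s = χ' s * cm
      have hLa : L s = cm := by
        simp only [hL]
        rw [if_neg (lt_irrefl s), if_pos hab]
        ring
      rw [hLa]
  have heq2 : Set.EqOn (fun s => χ' s * L s) (fun s => χ' s * (cm + k * (s - a)))
      (Set.uIcc a b) := by
    intro s hs
    rw [Set.uIcc_of_le hab] at hs
    simp only [hL, if_neg (not_lt.2 hs.1), if_pos hs.2]
  have heq3 : Set.EqOn (fun s => χ' s * L s) (fun s => χ' s * (cm + k * (b - a)))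
      (Set.uIcc b R) := by
    intro s hs
    rw [Set.uIcc_of_le hbR] at hs
    by_cases h : s ≤ b
    · have hsb : s = b := le_antisymm h hs.1
      simp only [hL, hsb, if_neg (not_lt.2 hab), if_pos le_rfl]
    · simp only [hL, if_neg (not_lt.2 (le_trans hab (hs.1))), if_neg h]
  have hiiOf : ∀ (x y : ℝ) (g : ℝ → ℝ), Continuous g →
      Set.EqOn (fun s => χ' s * L s) g (Set.uIcc x y) →
      IntervalIntegrable (fun s => χ' s * L s) volume x y := by
    intro x y g hg heq
    rw [intervalIntegrable_iff]
    exact (intervalIntegrable_iff.1 (hg.intervalIntegrable x y)).congr_fun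
      (fun s hs => (heq (uIoc_subset_uIcc hs)).symm) measurableSet_uIoc
  have hii1 := hiiOf (-R) a _ hconta heq1
  have hii2 := hiiOf a b _ hcontm heq2
  have hii3 := hiiOf b R _ hcontb heq3
  have h1 := intervalIntegral.integral_add_adjacent_intervals hii1 hii2
  have h2 := intervalIntegral.integral_add_adjacent_intervals (hii1.trans hii2) hii3
  have hftc : ∀ x y : ℝ, (∫ s in x..y, χ' s) = χ y - χ x := fun x y =>
    intervalIntegral.integral_eq_sub_of_hasDerivAt (fun s _ => hd s)
      hχ'int.intervalIntegrable
  have va : (∫ s in (-R)..a, χ' s * L s) = (χ a - χ (-R)) * cm := by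
    rw [intervalIntegral.integral_congr heq1, intervalIntegral.integral_mul_const, hftc]
  have vb : (∫ s in b..R, χ' s * L s) = (χ R - χ b) * (cm + k * (b - a)) := by
    rw [intervalIntegral.integral_congr heq3, intervalIntegral.integral_mul_const, hftc]
  have vm : (∫ s in a..b, χ' s * L s)
      = χ b * (cm + k * (b - a)) - χ a * (cm + k * (a - a)) - (∫ s in a..b, χ s) * k := by
    rw [intervalIntegral.integral_congr heq2]
    have hv : ∀ s ∈ Set.uIcc a b, HasDerivAt (fun s => cm + k * (s - a)) k s := by
      intro s _
      have := (((hasDerivAt_id s).sub_const a).const_mul k).const_add cm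
      simpa using this
    have hparts := intervalIntegral.integral_deriv_mul_eq_sub (fun s _ => hd s) hv
      hχ'int.intervalIntegrable (continuous_const.intervalIntegrable _ _)
    rw [intervalIntegral.integral_add (hcontm.intervalIntegrable _ _)
      ((show Continuous (fun s => χ s * k) from hχcont.mul continuous_const).intervalIntegrable a b),
      intervalIntegral.integral_mul_const] at hparts
    linarith
  have : (∫ s, χ' s * L s) = ∫ s in (-R)..R, χ' s * L s := hstep1.trans hstep2
  rw [this, ← h2, ← h1, va, vm, vb, hm, hp]
  ring

/-- Integrability companion to `aux1d`. -/
lemma aux1d_int {χ' : ℝ → ℝ} {a b cm k R : ℝ} (hc : Continuous χ') (hab : a ≤ b)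
    (hvan : ∀ s ∉ Set.Icc (-R) R, χ' s = 0) :
    Integrable (fun s => χ' s *
      (if s < a then cm else if s ≤ b then cm + k * (s - a) else cm + k * (b - a))) := by
  set L : ℝ → ℝ := fun s => if s < a then cm else if s ≤ b then cm + k * (s - a)
    else cm + k * (b - a) with hL
  have hχ'int : Integrable χ' :=
    hc.integrable_of_hasCompactSupport (HasCompactSupport.intro isCompact_Icc hvan)
  have hLmeas : Measurable L := by
    apply Measurable.ite (measurableSet_lt measurable_id measurable_const) measurable_const
    apply Measurable.ite (measurableSet_le measurable_id measurable_const) ?_ measurable_const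
    exact measurable_const.add (measurable_const.mul (measurable_id.sub measurable_const))
  refine Integrable.mono' (hχ'int.norm.const_mul (|cm| + |k| * (b - a))) ?_ ?_
  · exact hc.aestronglyMeasurable.mul hLmeas.aestronglyMeasurable
  · filter_upwards with s
    have hkba : 0 ≤ |k| * (b - a) := mul_nonneg (abs_nonneg k) (by linarith)
    have hLb : |L s| ≤ |cm| + |k| * (b - a) := by
      by_cases h1 : s < a
      · rw [hL]
        simp only [if_pos h1]
        linarith [abs_nonneg cm, le_refl |cm|]
      · by_cases h2 : s ≤ b
        · rw [hL]
          simp only [if_neg h1, if_pos h2]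
          have hsa : |s - a| ≤ b - a :=
            abs_le.2 ⟨by linarith [not_lt.1 h1], by linarith⟩
          calc |cm + k * (s - a)| ≤ |cm| + |k * (s - a)| := abs_add_le _ _
            _ = |cm| + |k| * |s - a| := by rw [abs_mul]
            _ ≤ |cm| + |k| * (b - a) :=
                add_le_add le_rfl (mul_le_mul_of_nonneg_left hsa (abs_nonneg k))
        · rw [hL]
          simp only [if_neg h1, if_neg h2]
          have hba : |b - a| ≤ b - a := by rw [abs_of_nonneg (by linarith)]
          calc |cm + k * (b - a)| ≤ |cm| + |k * (b - a)| := abs_add_le _ _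
            _ = |cm| + |k| * |b - a| := by rw [abs_mul]
            _ ≤ |cm| + |k| * (b - a) :=
                add_le_add le_rfl (mul_le_mul_of_nonneg_left hba (abs_nonneg k))
    calc ‖χ' s * L s‖ = ‖χ' s‖ * |L s| := by rw [norm_mul]; rfl
      _ ≤ ‖χ' s‖ * (|cm| + |k| * (b - a)) :=
          mul_le_mul_of_nonneg_left hLb (norm_nonneg _)
      _ = (|cm| + |k| * (b - a)) * ‖χ' s‖ := mul_comm _ _


set_option maxHeartbeats 2000000 in
/-- **Example 6, condition (c1) for the Neumann calibration.** Let `u` be a bounded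
`C²` solution, with bounded gradient, of `Δu = β(u − g)` on `Ω`, with `g` bounded
and continuous, and let `m = inf u`, `M = sup u`. Then the field
`φ(x,t) = (0, β|m/2 − u/2|² − β|m/2 + u/2 − g|²)` for `t − u/2 < m/2`,
`φ(x,t) = (2∇u, |∇u|² − β|t − g|² + β|t − u|²)` for `m/2 ≤ t − u/2 ≤ M/2`,
`φ(x,t) = (0, β|M/2 − u/2|² − β|M/2 + u/2 − g|²)` for `t − u/2 > M/2`,
is divergence-free on `Ω × ℝ` in the distributional sense. -/
theorem statement_17 (n : ℕ)
    (Ω : Set (EuclideanSpace ℝ (Fin n))) (hΩ_open : IsOpen Ω)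
    (hΩ_bdd : Bornology.IsBounded Ω)
    (β : ℝ) (hβ : 0 < β)
    (g : EuclideanSpace ℝ (Fin n) → ℝ)
    (hg_cont : ContinuousOn g Ω) (hg_bdd : ∃ C : ℝ, ∀ x ∈ Ω, |g x| ≤ C)
    (u : EuclideanSpace ℝ (Fin n) → ℝ)
    (hu_C2 : ContDiffOn ℝ 2 u Ω)
    (hu_bdd : ∃ C : ℝ, ∀ x ∈ Ω, |u x| ≤ C)
    (hgrad_bdd : ∃ C : ℝ, ∀ x ∈ Ω, ‖gradient u x‖ ≤ C)
    -- Δu = β(u − g) on Ω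
    (hu_pde : ∀ x ∈ Ω,
      (∑ i : Fin n, fderiv ℝ (fun y => fderiv ℝ u y (EuclideanSpace.single i 1)) x
        (EuclideanSpace.single i 1)) = β * (u x - g x))
    (m M : ℝ) (hm : m = sInf (u '' Ω)) (hM : M = sSup (u '' Ω))
    (φ : EuclideanSpace ℝ (Fin n) × ℝ → EuclideanSpace ℝ (Fin n) × ℝ)
    (hφ : ∀ p : EuclideanSpace ℝ (Fin n) × ℝ, φ p =
      if p.2 - u p.1 / 2 < m / 2 then
        (0, β * (m / 2 - u p.1 / 2) ^ 2 - β * (m / 2 + u p.1 / 2 - g p.1) ^ 2)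
      else if p.2 - u p.1 / 2 ≤ M / 2 then
        ((2 : ℝ) • gradient u p.1,
          ‖gradient u p.1‖ ^ 2 - β * (p.2 - g p.1) ^ 2 + β * (p.2 - u p.1) ^ 2)
      else
        (0, β * (M / 2 - u p.1 / 2) ^ 2 - β * (M / 2 + u p.1 / 2 - g p.1) ^ 2)) :
    ∀ ψ : EuclideanSpace ℝ (Fin n) × ℝ → ℝ, ContDiff ℝ (⊤ : ℕ∞) ψ → HasCompactSupport ψ →
      tsupport ψ ⊆ Ω ×ˢ (Set.univ : Set ℝ) →
      (∫ p in Ω ×ˢ (Set.univ : Set ℝ), fderiv ℝ ψ p (φ p)) = 0 := by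
  intro ψ hψ hψc hψs
  classical
  rcases Set.eq_empty_or_nonempty Ω with hΩe | ⟨x₀, hx₀⟩
  · simp [hΩe]
  obtain ⟨Cu, hCu⟩ := hu_bdd
  set a : ℝ := m / 2 with ha
  set b : ℝ := M / 2 with hb
  have hmM : m ≤ M := by
    rw [hm, hM]
    exact csInf_le_csSup ((Set.nonempty_of_mem hx₀).image u) ⟨-Cu, fun y ⟨x, hx, hxe⟩ => hxe ▸ (abs_le.1 (hCu x hx)).1⟩
      ⟨Cu, fun y ⟨x, hx, hxe⟩ => hxe ▸ (abs_le.1 (hCu x hx)).2⟩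
  have hab : a ≤ b := by rw [ha, hb]; linarith
  set K : Set (EuclideanSpace ℝ (Fin n) × ℝ) := tsupport ψ with hK
  have hKc : IsCompact K := hψc
  set K₀ : Set (EuclideanSpace ℝ (Fin n)) := Prod.fst '' K with hK₀
  have hK₀c : IsCompact K₀ := hKc.image continuous_fst
  have hK₀Ω : K₀ ⊆ Ω := by
    rintro x ⟨p, hp, rfl⟩
    exact (hψs hp).1
  have hK₀K : ∀ p : EuclideanSpace ℝ (Fin n) × ℝ, p.1 ∉ K₀ → p ∉ K := by
    intro p hp hmem
    exact hp ⟨p, hmem, rfl⟩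
  have hψ0 : ∀ p ∉ K, ψ p = 0 := fun p hp => image_eq_zero_of_notMem_tsupport hp
  have hDψ0 : ∀ p ∉ K, fderiv ℝ ψ p = 0 := fun p hp => fderiv_of_notMem_tsupport _ hp
  have hψdiff : Differentiable ℝ ψ := hψ.differentiable (by simp)
  have hDψcont : Continuous (fderiv ℝ ψ) := hψ.continuous_fderiv (by simp)
  -- u regularity
  have huΩdiff : ∀ x ∈ Ω, DifferentiableAt ℝ u x := fun x hx =>
    (hu_C2.contDiffAt (hΩ_open.mem_nhds hx)).differentiableAt two_ne_zero
  have hucont : ContinuousOn u Ω := hu_C2.continuousOn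
  have hDucd : ContDiffOn ℝ 1 (fderiv ℝ u) Ω :=
    hu_C2.fderiv_of_isOpen hΩ_open (by norm_num)
  have hDucont : ContinuousOn (fderiv ℝ u) Ω := hDucd.continuousOn
  have hgradinner : ∀ (x : EuclideanSpace ℝ (Fin n)) (v : EuclideanSpace ℝ (Fin n)), ⟪gradient u x, v⟫ = fderiv ℝ u x v := by
    intro x v
    simp only [gradient]
    exact InnerProductSpace.toDual_symm_apply
  have hgradeq : ∀ x : EuclideanSpace ℝ (Fin n), gradient u x =
      (InnerProductSpace.toDual ℝ (EuclideanSpace ℝ (Fin n))).symm (fderiv ℝ u x) := fun x => rfl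
  have hgradcont : ContinuousOn (fun x => gradient u x) Ω := by
    have h1 : ContinuousOn (fun x => (InnerProductSpace.toDual ℝ (EuclideanSpace ℝ (Fin n))).symm (fderiv ℝ u x)) Ω :=
      (InnerProductSpace.toDual ℝ (EuclideanSpace ℝ (Fin n))).symm.continuous.comp_continuousOn hDucont
    exact h1.congr fun x _ => hgradeq x
  have hgradfderiv : ∀ x : EuclideanSpace ℝ (Fin n), fderiv ℝ u x (gradient u x) = ‖gradient u x‖ ^ 2 := by
    intro x
    rw [← hgradinner]
    exact real_inner_self_eq_norm_sq _
  -- bounds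
  obtain ⟨R₀, hR₀0, hR₀⟩ : ∃ R₀ : ℝ, 0 ≤ R₀ ∧ ∀ p ∈ K, |p.2| ≤ R₀ := by
    obtain ⟨r, hr⟩ := hKc.isBounded.subset_closedBall 0
    exact ⟨|r|, abs_nonneg r, fun p hp => le_trans (le_trans (norm_snd_le p)
      (mem_closedBall_zero_iff.1 (hr hp))) (le_abs_self r)⟩
  have hCu0 : 0 ≤ Cu := le_trans (abs_nonneg _) (hCu x₀ hx₀)
  set R₁ : ℝ := R₀ + Cu / 2 + |a| + |b| + 1 with hR₁
  have hvanK : ∀ x ∈ Ω, ∀ s : ℝ, s ∉ Set.Icc (-R₁) R₁ → (x, s + u x / 2) ∉ K := by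
    intro x hx s hs hmem
    have h1 : |s + u x / 2| ≤ R₀ := hR₀ _ hmem
    have h2 : |u x| ≤ Cu := hCu x hx
    have h3 : R₁ < |s| := by
      rcases not_and_or.1 ((Set.mem_Icc).not.1 hs) with h | h
      · push_neg at h
        exact lt_of_lt_of_le (by linarith) (neg_le_abs s)
      · push_neg at h
        exact lt_of_lt_of_le h (le_abs_self s)
    have h4 : |s| ≤ |s + u x / 2| + |u x / 2| := by
      calc |s| = |(s + u x / 2) + (-(u x / 2))| := by rw [add_neg_cancel_right]
      _ ≤ |s + u x / 2| + |-(u x / 2)| := abs_add_le _ _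
      _ = |s + u x / 2| + |u x / 2| := by rw [abs_neg]
    have h5 : |u x / 2| ≤ Cu / 2 := by
      rw [abs_div]
      simp only [abs_two]
      linarith [abs_le.1 h2, abs_nonneg (u x)]
    have h7 : |s| ≤ R₀ + Cu / 2 := by linarith
    have h8 : R₁ < R₀ + Cu / 2 := lt_of_lt_of_le h3 h7
    rw [hR₁] at h8
    linarith [abs_nonneg a, abs_nonneg b]
  -- the two auxiliary integrands
  set ee : EuclideanSpace ℝ (Fin n) × ℝ → ℝ := fun q =>
    fderiv ℝ ψ (q.1, q.2 + u q.1 / 2)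
      (((2 : ℝ) • gradient u q.1, ‖gradient u q.1‖ ^ 2)) with hee
  set qq : EuclideanSpace ℝ (Fin n) × ℝ → ℝ := fun q =>
    2 * β * (u q.1 - g q.1) * ψ (q.1, q.2 + u q.1 / 2) with hqq
  have heeO : ∀ q : EuclideanSpace ℝ (Fin n) × ℝ, q.1 ∉ K₀ → ee q = 0 := by
    intro q hq
    simp only [hee]
    rw [hDψ0 (q.1, q.2 + u q.1 / 2) (hK₀K (q.1, q.2 + u q.1 / 2) hq)]
    simp
  have hqqO : ∀ q : EuclideanSpace ℝ (Fin n) × ℝ, q.1 ∉ K₀ → qq q = 0 := by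
    intro q hq
    simp only [hqq]
    rw [hψ0 (q.1, q.2 + u q.1 / 2) (hK₀K (q.1, q.2 + u q.1 / 2) hq), mul_zero]
  have hshiftcont : ContinuousOn (fun q : EuclideanSpace ℝ (Fin n) × ℝ => (q.1, q.2 + u q.1 / 2))
      (Ω ×ˢ (Set.univ : Set ℝ)) := by
    apply ContinuousOn.prodMk continuous_fst.continuousOn
    exact continuous_snd.continuousOn.add
      (((hucont.comp continuous_fst.continuousOn (fun q hq => hq.1))).div_const 2)
  have heecont : Continuous ee := by
    apply auxGlue_cont (hΩ_open.prod isOpen_univ) (hK₀c.isClosed.isOpen_compl.prod isOpen_univ)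
    · apply ContinuousOn.clm_apply
      · exact hDψcont.comp_continuousOn hshiftcont
      · apply ContinuousOn.prodMk
        · exact (hgradcont.comp continuous_fst.continuousOn (fun (q : EuclideanSpace ℝ (Fin n) × ℝ) (hq : q ∈ Ω ×ˢ (Set.univ : Set ℝ)) => hq.1)).const_smul (2:ℝ)
        · exact ((hgradcont.comp continuous_fst.continuousOn (fun q hq => hq.1)).norm).pow 2
    · exact fun q hq => heeO q hq.1
    · intro q
      by_cases h : q.1 ∈ Ω
      · exact Or.inl ⟨h, Set.mem_univ _⟩
      · exact Or.inr ⟨fun hh => h (hK₀Ω hh), Set.mem_univ _⟩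
  have hqqcont : Continuous qq := by
    apply auxGlue_cont (hΩ_open.prod isOpen_univ) (hK₀c.isClosed.isOpen_compl.prod isOpen_univ)
    · apply ContinuousOn.mul
      · exact (continuousOn_const.mul ((hucont.sub hg_cont).comp
          continuous_fst.continuousOn (fun q hq => hq.1)))
      · exact hψ.continuous.comp_continuousOn hshiftcont
    · exact fun q hq => hqqO q hq.1
    · intro q
      by_cases h : q.1 ∈ Ω
      · exact Or.inl ⟨h, Set.mem_univ _⟩
      · exact Or.inr ⟨fun hh => h (hK₀Ω hh), Set.mem_univ _⟩
  have heesupp : ∀ q : EuclideanSpace ℝ (Fin n) × ℝ, q ∉ K₀ ×ˢ Set.Icc (-R₁) R₁ → ee q = 0 := by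
    intro q hq
    by_cases h1 : q.1 ∈ K₀
    · have h2 : q.2 ∉ Set.Icc (-R₁) R₁ := fun h => hq ⟨h1, h⟩
      simp only [hee]
      rw [hDψ0 (q.1, q.2 + u q.1 / 2) (hvanK q.1 (hK₀Ω h1) q.2 h2)]
      simp
    · exact heeO q h1
  have hqqsupp : ∀ q : EuclideanSpace ℝ (Fin n) × ℝ, q ∉ K₀ ×ˢ Set.Icc (-R₁) R₁ → qq q = 0 := by
    intro q hq
    by_cases h1 : q.1 ∈ K₀
    · have h2 : q.2 ∉ Set.Icc (-R₁) R₁ := fun h => hq ⟨h1, h⟩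
      simp only [hqq]
      rw [hψ0 (q.1, q.2 + u q.1 / 2) (hvanK q.1 (hK₀Ω h1) q.2 h2), mul_zero]
    · exact hqqO q h1
  have heeHCS : HasCompactSupport ee :=
    HasCompactSupport.intro (hK₀c.prod isCompact_Icc) heesupp
  have hqqHCS : HasCompactSupport qq :=
    HasCompactSupport.intro (hK₀c.prod isCompact_Icc) hqqsupp
  have heeint : Integrable ee (volume.prod volume) := by
    rw [← Measure.volume_eq_prod]
    exact heecont.integrable_of_hasCompactSupport heeHCS
  have hqqint : Integrable qq (volume.prod volume) := by
    rw [← Measure.volume_eq_prod]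
    exact hqqcont.integrable_of_hasCompactSupport hqqHCS
  -- divergence theorem step
  have hdiv : ∀ s : ℝ, (∫ x, ee (x, s)) = -∫ x, qq (x, s) := by
    intro s
    set w : EuclideanSpace ℝ (Fin n) → ℝ := fun x => ψ (x, s + u x / 2) with hwdef
    have hw0 : ∀ x ∉ K₀, w x = 0 := by
      intro x hx
      simp only [hwdef]
      exact hψ0 (x, s + u x / 2) (hK₀K (x, s + u x / 2) hx)
    have hcov : ∀ x : EuclideanSpace ℝ (Fin n), x ∈ Ω ∨ x ∈ K₀ᶜ := by
      intro x
      by_cases h : x ∈ Ω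
      exacts [Or.inl h, Or.inr (fun hh => h (hK₀Ω hh))]
    have hwcd : ContDiff ℝ 1 w := by
      apply auxGlue_contDiff hΩ_open hK₀c.isClosed.isOpen_compl ?_ hw0 hcov
      exact (hψ.of_le (by simp)).comp_contDiffOn
        (contDiffOn_id.prodMk (contDiffOn_const.add ((hu_C2.of_le one_le_two).div_const 2)))
    have hwAt : ∀ x ∈ Ω, HasFDerivAt w
        ((fderiv ℝ ψ (x, s + u x / 2)).comp
          ((ContinuousLinearMap.id ℝ (EuclideanSpace ℝ (Fin n))).prod
            ((2⁻¹ : ℝ) • fderiv ℝ u x))) x := by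
      intro x hx
      have h2 : HasFDerivAt (fun y => s + u y / 2) ((2⁻¹ : ℝ) • fderiv ℝ u x) x := by
        have heqf : (fun y => s + u y / 2) = (fun y => s + (2⁻¹ : ℝ) • u y) := by
          funext y
          rw [smul_eq_mul]
          ring
        rw [heqf]
        exact ((huΩdiff x hx).hasFDerivAt.const_smul (2⁻¹ : ℝ)).const_add s
      exact (hψdiff (x, s + u x / 2)).hasFDerivAt.comp x ((hasFDerivAt_id x).prodMk h2)
    set Vf : Fin n → EuclideanSpace ℝ (Fin n) → ℝ :=
      fun i x => w x * (2 * fderiv ℝ u x (EuclideanSpace.single i 1)) with hVf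
    have hVf0 : ∀ i, ∀ x ∉ K₀, Vf i x = 0 := by
      intro i x hx
      simp only [hVf]
      rw [hw0 x hx, zero_mul]
    have hVcd : ∀ i, ContDiff ℝ 1 (Vf i) := by
      intro i
      apply auxGlue_contDiff hΩ_open hK₀c.isClosed.isOpen_compl ?_ (hVf0 i) hcov
      exact (hwcd.contDiffOn).mul (contDiffOn_const.mul (hDucd.clm_apply contDiffOn_const))
    have hVHCS : ∀ i, HasCompactSupport (Vf i) :=
      fun i => HasCompactSupport.intro hK₀c (hVf0 i)
    have hVint0 : ∀ i, (∫ x, fderiv ℝ (Vf i) x (EuclideanSpace.single i 1)) = 0 :=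
      fun i => auxIntegral_fderiv_eq_zero volume (hVcd i) (hVHCS i) _
    have hVintegrable : ∀ i,
        Integrable (fun x => fderiv ℝ (Vf i) x (EuclideanSpace.single i 1)) := by
      intro i
      refine Continuous.integrable_of_hasCompactSupport ?_ ((hVHCS i).fderiv_apply ℝ _)
      exact (ContinuousLinearMap.apply ℝ ℝ (EuclideanSpace.single i 1)).continuous.comp
        ((hVcd i).continuous_fderiv one_ne_zero)
    have hptdiv : ∀ x, (∑ i, fderiv ℝ (Vf i) x (EuclideanSpace.single i 1))
        = ee (x, s) + qq (x, s) := by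
      intro x
      by_cases hx : x ∈ Ω
      · have hwd := hwAt x hx
        have hwdiff : DifferentiableAt ℝ w x := hwd.differentiableAt
        have hDud : DifferentiableAt ℝ (fderiv ℝ u) x :=
          (hDucd.differentiableOn one_ne_zero).differentiableAt (hΩ_open.mem_nhds hx)
        have hDudi : ∀ i : Fin n,
            DifferentiableAt ℝ (fun y => fderiv ℝ u y (EuclideanSpace.single i 1)) x :=
          fun i => hDud.clm_apply (differentiableAt_const _)
        have hterm : ∀ i : Fin n, fderiv ℝ (Vf i) x (EuclideanSpace.single i 1)
            = w x * (2 * fderiv ℝ (fun y => fderiv ℝ u y (EuclideanSpace.single i 1)) x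
                (EuclideanSpace.single i 1))
              + (2 * fderiv ℝ u x (EuclideanSpace.single i 1))
                * fderiv ℝ w x (EuclideanSpace.single i 1) := by
          intro i
          have h1 : DifferentiableAt ℝ
              (fun y => 2 * fderiv ℝ u y (EuclideanSpace.single i 1)) x :=
            (hDudi i).const_mul 2
          have h2 := fderiv_fun_mul (𝕜 := ℝ) hwdiff h1
          simp only [hVf]
          rw [h2, fderiv_const_mul (hDudi i) 2]
          simp only [ContinuousLinearMap.add_apply, ContinuousLinearMap.smul_apply,
            smul_eq_mul]
          try ring
        have hsum1 : (∑ i : Fin n, w x * (2 * fderiv ℝ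
            (fun y => fderiv ℝ u y (EuclideanSpace.single i 1)) x
            (EuclideanSpace.single i 1))) = qq (x, s) := by
          rw [← Finset.mul_sum, ← Finset.mul_sum, hu_pde x hx]
          simp only [hqq, hwdef]
          ring
        have hsum2 : (∑ i : Fin n, (2 * fderiv ℝ u x (EuclideanSpace.single i 1))
            * fderiv ℝ w x (EuclideanSpace.single i 1)) = ee (x, s) := by
          have hlin : (∑ i : Fin n, (2 * fderiv ℝ u x (EuclideanSpace.single i 1))
              * fderiv ℝ w x (EuclideanSpace.single i 1))
              = fderiv ℝ w x (∑ i : Fin n,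
                  (2 * fderiv ℝ u x (EuclideanSpace.single i 1)) • EuclideanSpace.single i 1) := by
            rw [map_sum]
            refine Finset.sum_congr rfl fun i _ => ?_
            rw [_root_.map_smul, smul_eq_mul]
          have hbasis : (∑ i : Fin n,
              (2 * fderiv ℝ u x (EuclideanSpace.single i 1)) • EuclideanSpace.single i (1:ℝ))
              = (2 : ℝ) • gradient u x := by
            have h0 : ∀ i : Fin n,
                (2 * fderiv ℝ u x (EuclideanSpace.single i 1)) • EuclideanSpace.single i (1:ℝ)
                = (2:ℝ) • ((fderiv ℝ u x (EuclideanSpace.single i 1))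
                    • EuclideanSpace.single i (1:ℝ)) := by
              intro i
              rw [smul_smul]
            rw [Finset.sum_congr rfl (fun i _ => h0 i), ← Finset.smul_sum]
            congr 1
            have hrepr := (EuclideanSpace.basisFun (Fin n) ℝ).sum_repr' (gradient u x)
            rw [← hrepr]
            refine Finset.sum_congr rfl fun i _ => ?_
            rw [EuclideanSpace.basisFun_apply]
            congr 1
            rw [real_inner_comm, hgradinner]
          rw [hlin, hbasis, hwd.fderiv]
          have hv : ((2⁻¹ : ℝ) • fderiv ℝ u x) ((2:ℝ) • gradient u x)
              = ‖gradient u x‖ ^ 2 := by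
            rw [ContinuousLinearMap.smul_apply, _root_.map_smul, hgradfderiv, smul_smul,
              smul_eq_mul]
            norm_num
          simp only [ContinuousLinearMap.comp_apply, ContinuousLinearMap.prod_apply,
            ContinuousLinearMap.coe_id', id_eq, hv, hee]
        rw [Finset.sum_congr rfl (fun i _ => hterm i), Finset.sum_add_distrib, hsum1, hsum2]
        ring
      · have hxK : x ∉ K₀ := fun h => hx (hK₀Ω h)
        have hz : ∀ i : Fin n, fderiv ℝ (Vf i) x = 0 := by
          intro i
          have hev : Vf i =ᶠ[nhds x] (fun _ => 0) :=
            Filter.eventually_of_mem (hK₀c.isClosed.isOpen_compl.mem_nhds hxK)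
              (fun y hy => hVf0 i y hy)
          rw [hev.fderiv_eq]
          exact fderiv_const_apply 0
        rw [heeO (x, s) hxK, hqqO (x, s) hxK]
        simp [hz]
    have hees : Integrable (fun x => ee (x, s)) := by
      refine Continuous.integrable_of_hasCompactSupport
        (heecont.comp (continuous_id.prodMk continuous_const)) ?_
      exact HasCompactSupport.intro hK₀c (fun x hx => heeO (x, s) hx)
    have hqqs : Integrable (fun x => qq (x, s)) := by
      refine Continuous.integrable_of_hasCompactSupport
        (hqqcont.comp (continuous_id.prodMk continuous_const)) ?_
      exact HasCompactSupport.intro hK₀c (fun x hx => hqqO (x, s) hx)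
    have h0 : (∫ x, (ee (x, s) + qq (x, s))) = 0 := by
      have hc1 : (∫ x, (ee (x, s) + qq (x, s)))
          = ∫ x, ∑ i : Fin n, fderiv ℝ (Vf i) x (EuclideanSpace.single i 1) := by
        congr 1
        funext x
        rw [hptdiv x]
      rw [hc1, integral_finset_sum Finset.univ (fun i _ => hVintegrable i)]
      simp [hVint0]
    rw [integral_add hees hqqs] at h0
    linarith
  -- the decomposition of the domain
  set S : Set (EuclideanSpace ℝ (Fin n) × ℝ) := Ω ×ˢ (Set.univ : Set ℝ) with hSdef
  have hSopen : IsOpen S := hΩ_open.prod isOpen_univ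
  have hSmeas : MeasurableSet S := hSopen.measurableSet
  have hcond : ContinuousOn (fun p : EuclideanSpace ℝ (Fin n) × ℝ => p.2 - u p.1 / 2) S :=
    continuous_snd.continuousOn.sub
      ((hucont.comp continuous_fst.continuousOn (fun p hp => hp.1)).div_const 2)
  set A : Set (EuclideanSpace ℝ (Fin n) × ℝ) :=
    S ∩ (fun p : EuclideanSpace ℝ (Fin n) × ℝ => p.2 - u p.1 / 2) ⁻¹' (Set.Iio a) with hAdef
  set Cs : Set (EuclideanSpace ℝ (Fin n) × ℝ) :=
    S ∩ (fun p : EuclideanSpace ℝ (Fin n) × ℝ => p.2 - u p.1 / 2) ⁻¹' (Set.Ioi b) with hCdef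
  set B : Set (EuclideanSpace ℝ (Fin n) × ℝ) := S \ (A ∪ Cs) with hBdef
  have hAmeas : MeasurableSet A :=
    (hcond.isOpen_inter_preimage hSopen isOpen_Iio).measurableSet
  have hCmeas : MeasurableSet Cs :=
    (hcond.isOpen_inter_preimage hSopen isOpen_Ioi).measurableSet
  have hBmeas : MeasurableSet B := hSmeas.diff (hAmeas.union hCmeas)
  set f₁ : EuclideanSpace ℝ (Fin n) × ℝ → ℝ := fun p => fderiv ℝ ψ p
    ((0 : EuclideanSpace ℝ (Fin n)),
      β * (a - u p.1 / 2) ^ 2 - β * (a + u p.1 / 2 - g p.1) ^ 2) with hf₁def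
  set f₂ : EuclideanSpace ℝ (Fin n) × ℝ → ℝ := fun p => fderiv ℝ ψ p
    (((2 : ℝ) • gradient u p.1,
      ‖gradient u p.1‖ ^ 2 - β * (p.2 - g p.1) ^ 2 + β * (p.2 - u p.1) ^ 2)) with hf₂def
  set f₃ : EuclideanSpace ℝ (Fin n) × ℝ → ℝ := fun p => fderiv ℝ ψ p
    ((0 : EuclideanSpace ℝ (Fin n)),
      β * (b - u p.1 / 2) ^ 2 - β * (b + u p.1 / 2 - g p.1) ^ 2) with hf₃def
  set F : EuclideanSpace ℝ (Fin n) × ℝ → ℝ := fun p =>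
    A.indicator f₁ p + B.indicator f₂ p + Cs.indicator f₃ p with hFdef
  have hKS : K ⊆ S := hψs
  have hcovS : ∀ p : EuclideanSpace ℝ (Fin n) × ℝ, p ∈ S ∨ p ∈ Kᶜ := by
    intro p
    by_cases h : p ∈ S
    exacts [Or.inl h, Or.inr (fun hh => h (hKS hh))]
  have hf₁0 : ∀ p ∈ Kᶜ, f₁ p = 0 := by
    intro p hp
    simp only [hf₁def]
    rw [hDψ0 p hp]
    simp
  have hf₂0 : ∀ p ∈ Kᶜ, f₂ p = 0 := by
    intro p hp
    simp only [hf₂def]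
    rw [hDψ0 p hp]
    simp
  have hf₃0 : ∀ p ∈ Kᶜ, f₃ p = 0 := by
    intro p hp
    simp only [hf₃def]
    rw [hDψ0 p hp]
    simp
  have hucomp : ContinuousOn (fun p : EuclideanSpace ℝ (Fin n) × ℝ => u p.1) S :=
    hucont.comp continuous_fst.continuousOn (fun p hp => hp.1)
  have hgcomp : ContinuousOn (fun p : EuclideanSpace ℝ (Fin n) × ℝ => g p.1) S :=
    hg_cont.comp continuous_fst.continuousOn (fun p hp => hp.1)
  have hgradcomp : ContinuousOn
      (fun p : EuclideanSpace ℝ (Fin n) × ℝ => gradient u p.1) S :=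
    hgradcont.comp continuous_fst.continuousOn (fun p hp => hp.1)
  have hf₁cont : Continuous f₁ := by
    apply auxGlue_cont hSopen hKc.isClosed.isOpen_compl ?_ hf₁0 hcovS
    apply ContinuousOn.clm_apply hDψcont.continuousOn
    exact continuousOn_const.prodMk
      (((continuousOn_const.mul ((continuousOn_const.sub (hucomp.div_const 2)).pow 2))).sub
        (continuousOn_const.mul
          (((continuousOn_const.add (hucomp.div_const 2)).sub hgcomp).pow 2)))
  have hf₂cont : Continuous f₂ := by
    apply auxGlue_cont hSopen hKc.isClosed.isOpen_compl ?_ hf₂0 hcovS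
    apply ContinuousOn.clm_apply hDψcont.continuousOn
    apply ContinuousOn.prodMk (f := fun p : EuclideanSpace ℝ (Fin n) × ℝ => (2:ℝ) • gradient u p.1) (hgradcomp.const_smul (2:ℝ))
    exact ((hgradcomp.norm.pow 2).sub
      (continuousOn_const.mul ((continuous_snd.continuousOn.sub hgcomp).pow 2))).add
      (continuousOn_const.mul ((continuous_snd.continuousOn.sub hucomp).pow 2))
  have hf₃cont : Continuous f₃ := by
    apply auxGlue_cont hSopen hKc.isClosed.isOpen_compl ?_ hf₃0 hcovS
    apply ContinuousOn.clm_apply hDψcont.continuousOn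
    exact continuousOn_const.prodMk
      (((continuousOn_const.mul ((continuousOn_const.sub (hucomp.div_const 2)).pow 2))).sub
        (continuousOn_const.mul
          (((continuousOn_const.add (hucomp.div_const 2)).sub hgcomp).pow 2)))
  have hf₁int : Integrable f₁ :=
    hf₁cont.integrable_of_hasCompactSupport (HasCompactSupport.intro hKc hf₁0)
  have hf₂int : Integrable f₂ :=
    hf₂cont.integrable_of_hasCompactSupport (HasCompactSupport.intro hKc hf₂0)
  have hf₃int : Integrable f₃ :=
    hf₃cont.integrable_of_hasCompactSupport (HasCompactSupport.intro hKc hf₃0)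
  have hFint : Integrable F := by
    rw [hFdef]
    exact ((hf₁int.indicator hAmeas).add (hf₂int.indicator hBmeas)).add
      (hf₃int.indicator hCmeas)
  -- F agrees with the integrand on S and vanishes outside
  have hFeq : Set.EqOn (fun p => fderiv ℝ ψ p (φ p)) F S := by
    intro p hp
    simp only [hFdef]
    rw [hφ p]
    by_cases h1 : p.2 - u p.1 / 2 < a
    · have hpA : p ∈ A := ⟨hp, h1⟩
      have hpC : p ∉ Cs := by
        intro hc
        have h2 : b < p.2 - u p.1 / 2 := hc.2
        linarith
      have hpB : p ∉ B := fun hb => hb.2 (Or.inl hpA)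
      rw [Set.indicator_of_mem hpA, Set.indicator_of_notMem hpB,
        Set.indicator_of_notMem hpC, if_pos h1]
      simp only [hf₁def]
      ring
    · by_cases h2 : p.2 - u p.1 / 2 ≤ b
      · have hpA : p ∉ A := fun ha' => h1 ha'.2
        have hpC : p ∉ Cs := fun hc => absurd hc.2 (not_lt.2 h2)
        have hpB : p ∈ B := ⟨hp, fun hor => hor.elim hpA hpC⟩
        rw [Set.indicator_of_notMem hpA, Set.indicator_of_mem hpB,
          Set.indicator_of_notMem hpC, if_neg h1, if_pos h2]
        simp only [hf₂def]
        ring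
      · have hpA : p ∉ A := fun ha' => h1 ha'.2
        have hpB' : p ∈ Cs := ⟨hp, not_le.1 h2⟩
        have hpB : p ∉ B := fun hb => hb.2 (Or.inr hpB')
        rw [Set.indicator_of_notMem hpA, Set.indicator_of_notMem hpB,
          Set.indicator_of_mem hpB', if_neg h1, if_neg h2]
        simp only [hf₃def]
        ring
  have hFout : ∀ p ∉ S, F p = 0 := by
    intro p hp
    simp only [hFdef]
    rw [Set.indicator_of_notMem (fun hA' => hp hA'.1),
      Set.indicator_of_notMem (fun hB' => hp hB'.1),
      Set.indicator_of_notMem (fun hC' => hp hC'.1)]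
    ring
  have hJ1 : (∫ p in S, fderiv ℝ ψ p (φ p)) = ∫ p, F p := by
    rw [setIntegral_congr_fun hSmeas hFeq]
    exact setIntegral_eq_integral_of_forall_compl_eq_zero hFout
  -- marginal computation
  have hmarg : ∀ x : EuclideanSpace ℝ (Fin n), (∫ t, F (x, t))
      = (∫ s in Set.Icc a b, ee (x, s)) + ∫ s in Set.Icc a b, qq (x, s) := by
    intro x
    by_cases hx : x ∈ Ω
    · -- main case
      set χ : ℝ → ℝ := fun s => ψ (x, s + u x / 2) with hχdef
      set χ' : ℝ → ℝ := fun s => fderiv ℝ ψ (x, s + u x / 2)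
        ((0 : EuclideanSpace ℝ (Fin n)), (1 : ℝ)) with hχ'def
      set cm : ℝ := β * (a - u x / 2) ^ 2 - β * (a + u x / 2 - g x) ^ 2 with hcmdef
      set kk : ℝ := 2 * β * (g x - u x) with hkkdef
      have hder : ∀ s, HasDerivAt χ (χ' s) s := by
        intro s
        have h1 : HasDerivAt (fun s : ℝ => ((x, s + u x / 2) :
            EuclideanSpace ℝ (Fin n) × ℝ)) ((0 : EuclideanSpace ℝ (Fin n)), (1:ℝ)) s :=
          (hasDerivAt_const s x).prodMk ((hasDerivAt_id s).add_const (u x / 2))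
        exact (hψdiff (x, s + u x / 2)).hasFDerivAt.comp_hasDerivAt s h1
      have hχ'cont : Continuous χ' := by
        apply (ContinuousLinearMap.apply ℝ ℝ
          ((0 : EuclideanSpace ℝ (Fin n)), (1:ℝ))).continuous.comp
        exact hDψcont.comp (continuous_const.prodMk (continuous_id.add continuous_const))
      have hvx : ∀ s ∉ Set.Icc (-(R₁+1)) (R₁+1), χ' s = 0 := by
        intro s hs
        have hs' : s ∉ Set.Icc (-R₁) R₁ := by
          intro hmem
          apply hs
          constructor <;> [linarith [hmem.1]; linarith [hmem.2]]
        simp only [hχ'def]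
        rw [hDψ0 (x, s + u x / 2) (hvanK x hx s hs')]
        simp
      have hχm : χ (-(R₁+1)) = 0 := by
        simp only [hχdef]
        refine hψ0 (x, -(R₁+1) + u x / 2) (hvanK x hx (-(R₁+1)) ?_)
        intro hmem
        linarith [hmem.1]
      have hχp : χ (R₁+1) = 0 := by
        simp only [hχdef]
        refine hψ0 (x, (R₁+1) + u x / 2) (hvanK x hx (R₁+1) ?_)
        intro hmem
        linarith [hmem.2]
      have hRa' : -(R₁+1) ≤ a := by
        have := neg_abs_le a
        have h1 : |a| ≤ R₁ := by rw [hR₁]; linarith [hR₀0, hCu0, abs_nonneg b]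
        linarith
      have hbR' : b ≤ R₁+1 := by
        have := le_abs_self b
        have h1 : |b| ≤ R₁ := by rw [hR₁]; linarith [hR₀0, hCu0, abs_nonneg a]
        linarith
      have h1d := aux1d (cm := cm) (k := kk) hder hχ'cont hRa' hab hbR' hvx hχm hχp
      have hG2int := aux1d_int (a := a) (b := b) (cm := cm) (k := kk) hχ'cont hab hvx
      have heex : Continuous (fun s' => ee (x, s')) :=
        heecont.comp (continuous_const.prodMk continuous_id)
      have hind_int : Integrable ((Set.Icc a b).indicator (fun s' => ee (x, s'))) :=
        (heex.integrableOn_Icc).integrable_indicator measurableSet_Icc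
      -- pointwise identity
      have hpt : ∀ s : ℝ, F (x, s + u x / 2)
          = (Set.Icc a b).indicator (fun s' => ee (x, s')) s
            + χ' s * (if s < a then cm else if s ≤ b then cm + kk * (s - a)
                else cm + kk * (b - a)) := by
        intro s
        have hmemS : ((x, s + u x / 2) : EuclideanSpace ℝ (Fin n) × ℝ) ∈ S :=
          ⟨hx, Set.mem_univ _⟩
        simp only [hFdef]
        by_cases h1 : s < a
        · have hpA : ((x, s + u x / 2) : EuclideanSpace ℝ (Fin n) × ℝ) ∈ A :=
            ⟨hmemS, show s + u x / 2 - u x / 2 < a by linarith⟩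
          have hpC : ((x, s + u x / 2) : EuclideanSpace ℝ (Fin n) × ℝ) ∉ Cs := by
            intro hc
            have h2 : b < s + u x / 2 - u x / 2 := hc.2
            linarith
          have hpB : ((x, s + u x / 2) : EuclideanSpace ℝ (Fin n) × ℝ) ∉ B :=
            fun hb => hb.2 (Or.inl hpA)
          rw [Set.indicator_of_mem hpA, Set.indicator_of_notMem hpB,
            Set.indicator_of_notMem hpC,
            Set.indicator_of_notMem (fun hmem => (not_le.2 h1) (Set.mem_Icc.1 hmem).1), if_pos h1]
          simp only [hf₁def]
          have hvec : (((0 : EuclideanSpace ℝ (Fin n)),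
              β * (a - u x / 2) ^ 2 - β * (a + u x / 2 - g x) ^ 2) :
                EuclideanSpace ℝ (Fin n) × ℝ)
              = cm • (((0 : EuclideanSpace ℝ (Fin n)), (1:ℝ)) :
                EuclideanSpace ℝ (Fin n) × ℝ) := by
            rw [hcmdef]
            simp only [Prod.smul_mk, smul_zero, smul_eq_mul, mul_one]
          rw [hvec, ContinuousLinearMap.map_smul, smul_eq_mul]
          simp only [hχ'def]
          ring
        · by_cases h2 : s ≤ b
          · have hpA : ((x, s + u x / 2) : EuclideanSpace ℝ (Fin n) × ℝ) ∉ A := by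
              intro ha'
              have h3 : s + u x / 2 - u x / 2 < a := ha'.2
              exact h1 (by linarith)
            have hpC : ((x, s + u x / 2) : EuclideanSpace ℝ (Fin n) × ℝ) ∉ Cs := by
              intro hc
              have h3 : b < s + u x / 2 - u x / 2 := hc.2
              linarith
            have hpB : ((x, s + u x / 2) : EuclideanSpace ℝ (Fin n) × ℝ) ∈ B :=
              ⟨hmemS, fun hor => hor.elim hpA hpC⟩
            rw [Set.indicator_of_notMem hpA, Set.indicator_of_mem hpB,
              Set.indicator_of_notMem hpC,
              Set.indicator_of_mem (Set.mem_Icc.2 ⟨not_lt.1 h1, h2⟩), if_neg h1,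
              if_pos h2]
            simp only [hf₂def, hee]
            have hsplit : ((((2:ℝ) • gradient u x : EuclideanSpace ℝ (Fin n)),
                ‖gradient u x‖ ^ 2 - β * ((s + u x / 2) - g x) ^ 2
                  + β * ((s + u x / 2) - u x) ^ 2) : EuclideanSpace ℝ (Fin n) × ℝ)
                = (((2:ℝ) • gradient u x : EuclideanSpace ℝ (Fin n)), ‖gradient u x‖ ^ 2)
                  + (cm + kk * (s - a)) • (((0 : EuclideanSpace ℝ (Fin n)), (1:ℝ)) :
                    EuclideanSpace ℝ (Fin n) × ℝ) := by
              rw [hcmdef, hkkdef]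
              simp only [Prod.smul_mk, smul_zero, smul_eq_mul, mul_one, Prod.mk_add_mk,
                add_zero, Prod.mk.injEq]
              exact ⟨by simp, by ring⟩
            rw [hsplit, map_add, ContinuousLinearMap.map_smul, smul_eq_mul]
            simp only [hχ'def]
            ring
          · have hpA : ((x, s + u x / 2) : EuclideanSpace ℝ (Fin n) × ℝ) ∉ A := by
              intro ha'
              have h3 : s + u x / 2 - u x / 2 < a := ha'.2
              exact h1 (by linarith)
            have hpC : ((x, s + u x / 2) : EuclideanSpace ℝ (Fin n) × ℝ) ∈ Cs :=
              ⟨hmemS, show b < s + u x / 2 - u x / 2 by push_neg at h2; linarith⟩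
            have hpB : ((x, s + u x / 2) : EuclideanSpace ℝ (Fin n) × ℝ) ∉ B :=
              fun hb => hb.2 (Or.inr hpC)
            rw [Set.indicator_of_notMem hpA, Set.indicator_of_notMem hpB,
              Set.indicator_of_mem hpC,
              Set.indicator_of_notMem (fun hmem => h2 hmem.2), if_neg h1, if_neg h2]
            simp only [hf₃def]
            have hvec : (((0 : EuclideanSpace ℝ (Fin n)),
                β * (b - u x / 2) ^ 2 - β * (b + u x / 2 - g x) ^ 2) :
                  EuclideanSpace ℝ (Fin n) × ℝ)
                = (cm + kk * (b - a)) • (((0 : EuclideanSpace ℝ (Fin n)), (1:ℝ)) :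
                  EuclideanSpace ℝ (Fin n) × ℝ) := by
              rw [hcmdef, hkkdef]
              simp only [Prod.smul_mk, smul_zero, smul_eq_mul, mul_one, Prod.mk.injEq]
              exact ⟨by simp, by ring⟩
            rw [hvec, ContinuousLinearMap.map_smul, smul_eq_mul]
            simp only [hχ'def]
            ring
      -- put the marginal together
      have htr : (∫ s, F (x, s + u x / 2)) = ∫ t, F (x, t) :=
        integral_add_right_eq_self (fun t => F (x, t)) (u x / 2)
      rw [← htr, funext hpt, integral_add hind_int hG2int,
        integral_indicator measurableSet_Icc, h1d]
      congr 1
      have hqx : ∀ s, qq (x, s) = (-kk) * χ s := by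
        intro s
        simp only [hqq, hχdef, hkkdef]
        ring
      rw [setIntegral_congr_fun measurableSet_Icc (fun s _ => hqx s), integral_const_mul,
        integral_Icc_eq_integral_Ioc, ← intervalIntegral.integral_of_le hab]
      ring
    · -- x outside Ω
      have hxK : x ∉ K₀ := fun h => hx (hK₀Ω h)
      have hF0 : ∀ t, F (x, t) = 0 := fun t => hFout (x, t) (fun hmem => hx hmem.1)
      have he0 : ∀ s, ee (x, s) = 0 := fun s => heeO (x, s) hxK
      have hq0 : ∀ s, qq (x, s) = 0 := fun s => hqqO (x, s) hxK
      simp [hF0, he0, hq0]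
  -- Fubini and assembly
  have hFint' : Integrable F ((volume : Measure (EuclideanSpace ℝ (Fin n))).prod
      (volume : Measure ℝ)) := by
    rw [← Measure.volume_eq_prod]
    exact hFint
  have hJ2 : (∫ p, F p) = ∫ x, ∫ t, F (x, t) := by
    rw [Measure.volume_eq_prod]
    exact integral_prod F hFint'
  have hresteq : (volume : Measure (EuclideanSpace ℝ (Fin n))).prod
      ((volume : Measure ℝ).restrict (Set.Icc a b))
      = ((volume : Measure (EuclideanSpace ℝ (Fin n))).prod (volume : Measure ℝ)).restrict
        (Set.univ ×ˢ Set.Icc a b) := by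
    rw [← Measure.prod_restrict, Measure.restrict_univ]
  have heeint2 : Integrable ee ((volume : Measure (EuclideanSpace ℝ (Fin n))).prod
      ((volume : Measure ℝ).restrict (Set.Icc a b))) := by
    rw [hresteq]
    exact heeint.integrableOn
  have hqqint2 : Integrable qq ((volume : Measure (EuclideanSpace ℝ (Fin n))).prod
      ((volume : Measure ℝ).restrict (Set.Icc a b))) := by
    rw [hresteq]
    exact hqqint.integrableOn
  have hEint : Integrable (fun x => ∫ s in Set.Icc a b, ee (x, s)) :=
    heeint2.integral_prod_left
  have hQint : Integrable (fun x => ∫ s in Set.Icc a b, qq (x, s)) :=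
    hqqint2.integral_prod_left
  have hswapE : (∫ x, ∫ s in Set.Icc a b, ee (x, s)) = ∫ s in Set.Icc a b, ∫ x, ee (x, s) := by
    apply integral_integral_swap
    exact heeint2.congr (Filter.Eventually.of_forall (fun p => by
      simp [Function.uncurry]))
  have hswapQ : (∫ x, ∫ s in Set.Icc a b, qq (x, s)) = ∫ s in Set.Icc a b, ∫ x, qq (x, s) := by
    apply integral_integral_swap
    exact hqqint2.congr (Filter.Eventually.of_forall (fun p => by
      simp [Function.uncurry]))
  calc (∫ p in S, fderiv ℝ ψ p (φ p)) = ∫ p, F p := hJ1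
    _ = ∫ x, ∫ t, F (x, t) := hJ2
    _ = ∫ x, ((∫ s in Set.Icc a b, ee (x, s)) + ∫ s in Set.Icc a b, qq (x, s)) := by
        congr 1
        funext x
        exact hmarg x
    _ = (∫ x, ∫ s in Set.Icc a b, ee (x, s)) + ∫ x, ∫ s in Set.Icc a b, qq (x, s) :=
        integral_add hEint hQint
    _ = (∫ s in Set.Icc a b, ∫ x, ee (x, s)) + ∫ x, ∫ s in Set.Icc a b, qq (x, s) := by
        rw [hswapE]
    _ = (∫ s in Set.Icc a b, -∫ x, qq (x, s)) + ∫ x, ∫ s in Set.Icc a b, qq (x, s) := by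
        rw [setIntegral_congr_fun measurableSet_Icc (fun s _ => hdiv s)]
    _ = -(∫ s in Set.Icc a b, ∫ x, qq (x, s)) + ∫ x, ∫ s in Set.Icc a b, qq (x, s) := by
        rw [integral_neg]
    _ = 0 := by rw [hswapQ]; ring
end

section
/- Let Ω⊂ℝⁿ be a bounded open set, let a<b be real numbers, let g:Ω→{a,b} be a measurable function, let v:Ω→ℝⁿ be a C¹ vector field with compact support in Ω, and let σ:ℝ→[0,∞) be a smooth function with compact support contained in (a,b). Define φ:Ω×ℝ→ℝⁿ×ℝ by φ^x(x,t):=σ(t)v(x) and φ^t(x,t):=−div v(x)·∫_{g(x)}^{t}σ(s)ds. Then φ is bounded and divergence-free in the distributional sense: ∫_{Ω×ℝ} φ(x,t)·∇_{(x,t)}ψ(x,t) dx dt = 0 for every ψ∈C_c^∞(Ω×ℝ). -/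
open MeasureTheory Set Filter
open scoped RealInnerProductSpace

/-- Helper: construct a `HasLineDerivAt` from a `HasDerivAt` for an explicitly
rewritten one-variable function. -/
lemma hasLineDerivAt_of_eq {E F : Type*} [NormedAddCommGroup E] [NormedSpace ℝ E]
    [NormedAddCommGroup F] [NormedSpace ℝ F] (f : E → F) (f' : F) (x v : E) (G : ℝ → F)
    (hG : HasDerivAt G f' 0) (heq : ∀ s : ℝ, f (x + s • v) = G s) :
    HasLineDerivAt ℝ f f' x v := by
  have h : (fun s : ℝ => f (x + s • v)) = G := funext heq
  show HasDerivAt (fun s : ℝ => f (x + s • v)) f' 0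
  rw [h]; exact hG

/-- **Example 8, condition (c1).** With `g : Ω → {a, b}` measurable, `v` a `C¹`
vector field with compact support in `Ω`, and `σ ≥ 0` smooth with compact support
in `(a,b)`, the field `φˣ(x,t) = σ(t)v(x)`,
`φᵗ(x,t) = −div v(x)·∫_{g(x)}^{t} σ(s) ds` is bounded and divergence-free on
`Ω × ℝ` in the distributional sense. -/
theorem statement_18 (n : ℕ)
    (Ω : Set (EuclideanSpace ℝ (Fin n))) (hΩ_open : IsOpen Ω)
    (hΩ_bdd : Bornology.IsBounded Ω)
    (a b : ℝ) (hab : a < b)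
    (g : EuclideanSpace ℝ (Fin n) → ℝ) (hg_meas : Measurable g)
    (hg_vals : ∀ x ∈ Ω, g x = a ∨ g x = b)
    (v : EuclideanSpace ℝ (Fin n) → EuclideanSpace ℝ (Fin n))
    (hv_C1 : ContDiff ℝ 1 v) (hv_supp : HasCompactSupport v) (hv_in : tsupport v ⊆ Ω)
    (σ : ℝ → ℝ) (hσ_smooth : ContDiff ℝ (⊤ : ℕ∞) σ) (hσ_nonneg : ∀ t : ℝ, 0 ≤ σ t)
    (hσ_supp : HasCompactSupport σ) (hσ_in : tsupport σ ⊆ Set.Ioo a b)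
    (φx : EuclideanSpace ℝ (Fin n) → ℝ → EuclideanSpace ℝ (Fin n))
    (hφx : ∀ (x : EuclideanSpace ℝ (Fin n)) (t : ℝ), φx x t = σ t • v x)
    (φt : EuclideanSpace ℝ (Fin n) → ℝ → ℝ)
    (hφt : ∀ (x : EuclideanSpace ℝ (Fin n)) (t : ℝ), φt x t =
      -(∑ i : Fin n, fderiv ℝ (fun y => v y i) x (EuclideanSpace.single i 1)) *
        ∫ s in (g x)..t, σ s) :
    -- φ is bounded
    (∃ C : ℝ, ∀ x ∈ Ω, ∀ t : ℝ, ‖φx x t‖ ≤ C ∧ |φt x t| ≤ C) ∧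
    -- φ is divergence-free in the distributional sense on Ω × ℝ
    (∀ ψ : EuclideanSpace ℝ (Fin n) × ℝ → ℝ, ContDiff ℝ (⊤ : ℕ∞) ψ → HasCompactSupport ψ →
      tsupport ψ ⊆ Ω ×ˢ (Set.univ : Set ℝ) →
      (∫ p in Ω ×ˢ (Set.univ : Set ℝ), fderiv ℝ ψ p (φx p.1 p.2, φt p.1 p.2)) = 0) := by
  classical
  have hσ_cont : Continuous σ := hσ_smooth.continuous
  have hσ_int : Integrable σ := hσ_cont.integrable_of_hasCompactSupport hσ_supp
  have hv_cont : Continuous v := hv_C1.continuous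
  have hv_diff : Differentiable ℝ v := hv_C1.differentiable one_ne_zero
  have hvi_diff : ∀ i : Fin n, Differentiable ℝ (fun y => v y i) := fun i =>
    (EuclideanSpace.proj (𝕜 := ℝ) i).differentiable.comp hv_diff
  have hfderiv_vi : ∀ (i : Fin n) (x : EuclideanSpace ℝ (Fin n)),
      fderiv ℝ (fun y => v y i) x = (EuclideanSpace.proj (𝕜 := ℝ) i).comp (fderiv ℝ v x) := by
    intro i x
    have h : (fun y => v y i) = (EuclideanSpace.proj (𝕜 := ℝ) i) ∘ v := rfl
    rw [h, fderiv_comp x (EuclideanSpace.proj (𝕜 := ℝ) i).differentiableAt (hv_diff x),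
      ContinuousLinearMap.fderiv]
  set D : EuclideanSpace ℝ (Fin n) → ℝ :=
    fun x => ∑ i : Fin n, fderiv ℝ (fun y => v y i) x (EuclideanSpace.single i 1) with hD_def
  have hφt' : ∀ (x : EuclideanSpace ℝ (Fin n)) (t : ℝ),
      φt x t = -(D x) * ∫ s in (g x)..t, σ s := hφt
  have hDi_cont : ∀ i : Fin n,
      Continuous fun x => fderiv ℝ (fun y => v y i) x (EuclideanSpace.single i 1) := by
    intro i
    simp only [hfderiv_vi, ContinuousLinearMap.comp_apply]
    exact (EuclideanSpace.proj (𝕜 := ℝ) i).continuous.comp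
      ((hv_C1.continuous_fderiv one_ne_zero).clm_apply continuous_const)
  have hD_cont : Continuous D := continuous_finset_sum _ fun i _ => hDi_cont i
  have hD_zero : ∀ x, x ∉ tsupport v → D x = 0 := by
    intro x hx
    have h0 : fderiv ℝ v x = 0 := by
      by_contra h
      exact hx (support_fderiv_subset ℝ (Function.mem_support.2 h))
    simp [hD_def, hfderiv_vi, h0]
  have hD_cpt : HasCompactSupport D := by
    refine IsCompact.of_isClosed_subset hv_supp (isClosed_tsupport _)
      (closure_minimal (fun x hx => ?_) (isClosed_tsupport v))
    by_contra h
    exact hx (hD_zero x h)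
  obtain ⟨Cσ, hCσ⟩ := hσ_supp.exists_bound_of_continuous hσ_cont
  obtain ⟨Cv, hCv⟩ := hv_supp.exists_bound_of_continuous hv_cont
  obtain ⟨CD, hCD⟩ := hD_cpt.exists_bound_of_continuous hD_cont
  have hCσ0 : 0 ≤ Cσ := le_trans (norm_nonneg _) (hCσ 0)
  have hCv0 : 0 ≤ Cv := le_trans (norm_nonneg _) (hCv 0)
  have hCD0 : 0 ≤ CD := le_trans (norm_nonneg _) (hCD 0)
  have hM0 : 0 ≤ ∫ s, σ s := integral_nonneg hσ_nonneg
  have hIbound : ∀ u t : ℝ, |∫ s in u..t, σ s| ≤ ∫ s, σ s := by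
    have key : ∀ u t : ℝ, u ≤ t → |∫ s in u..t, σ s| ≤ ∫ s, σ s := by
      intro u t h
      rw [intervalIntegral.integral_of_le h,
        abs_of_nonneg (setIntegral_nonneg measurableSet_Ioc fun s _ => hσ_nonneg s)]
      exact setIntegral_le_integral hσ_int (Eventually.of_forall hσ_nonneg)
    intro u t
    rcases le_total u t with h | h
    · exact key u t h
    · rw [intervalIntegral.integral_symm, abs_neg]
      exact key t u h
  have hφt_bd : ∀ x t, |φt x t| ≤ CD * ∫ s, σ s := by
    intro x t
    rw [hφt' x t, abs_mul, abs_neg]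
    exact mul_le_mul (by simpa using hCD x) (hIbound _ _) (abs_nonneg _) hCD0
  constructor
  · refine ⟨Cσ * Cv + CD * ∫ s, σ s, fun x _ t => ⟨?_, ?_⟩⟩
    · rw [hφx]
      calc ‖σ t • v x‖ = ‖σ t‖ * ‖v x‖ := norm_smul _ _
        _ ≤ Cσ * Cv := mul_le_mul (hCσ t) (hCv x) (norm_nonneg _) hCσ0
        _ ≤ _ := le_add_of_nonneg_right (mul_nonneg hCD0 hM0)
    · exact le_trans (hφt_bd x t) (le_add_of_nonneg_left (mul_nonneg hCσ0 hCv0))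
  · intro ψ hψ hψc hψs
    haveI : Measure.IsAddHaarMeasure (volume : Measure (EuclideanSpace ℝ (Fin n) × ℝ)) :=
      (inferInstance :
        Measure.IsAddHaarMeasure ((volume : Measure (EuclideanSpace ℝ (Fin n))).prod volume))
    have hψ_diff : Differentiable ℝ ψ := hψ.differentiable (by simp)
    have hψ_cont : Continuous ψ := hψ.continuous
    have hfψ_cont : Continuous (fderiv ℝ ψ) := hψ.continuous_fderiv (by simp)
    have hfψ_cpt : HasCompactSupport (fderiv ℝ ψ) := hψc.fderiv ℝ
    obtain ⟨Cψ, hCψ⟩ := hψc.exists_bound_of_continuous hψ_cont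
    obtain ⟨Cψ', hCψ'⟩ := hfψ_cpt.exists_bound_of_continuous hfψ_cont
    have hfψ0 : ∀ p, p ∉ tsupport ψ → fderiv ℝ ψ p = 0 := by
      intro p hp
      by_contra h
      exact hp (support_fderiv_subset ℝ (Function.mem_support.2 h))
    have hψ0 : ∀ p, p ∉ tsupport ψ → ψ p = 0 := fun p hp =>
      image_eq_zero_of_notMem_tsupport hp
    rw [setIntegral_eq_integral_of_forall_compl_eq_zero (fun p hp => by
      rw [hfψ0 p fun hmem => hp (hψs hmem)]; rfl)]
    -- integrability helpers
    have keyC : ∀ F : EuclideanSpace ℝ (Fin n) × ℝ → ℝ, Continuous F →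
        (∀ p, p ∉ tsupport ψ → F p = 0) → Integrable F := by
      intro F hFc hF0
      refine hFc.integrable_of_hasCompactSupport ?_
      refine IsCompact.of_isClosed_subset hψc (isClosed_tsupport _)
        (closure_minimal (fun p hp => ?_) (isClosed_tsupport ψ))
      by_contra h
      exact hp (hF0 p h)
    have hμψ : volume (tsupport ψ) < ⊤ := hψc.measure_lt_top
    have key : ∀ F : EuclideanSpace ℝ (Fin n) × ℝ → ℝ, AEStronglyMeasurable F volume →
        (∀ p, p ∉ tsupport ψ → F p = 0) → (∃ C, ∀ p, |F p| ≤ C) → Integrable F := by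
      rintro F hFm hF0 ⟨C, hC⟩
      refine Integrable.mono' (g := (tsupport ψ).indicator fun _ => C) ?_ hFm ?_
      · exact (integrable_indicator_iff (isClosed_tsupport ψ).measurableSet).2
          (integrableOn_const hμψ.ne)
      · refine Eventually.of_forall fun p => ?_
        by_cases hp : p ∈ tsupport ψ
        · simpa [Set.indicator_of_mem hp, Real.norm_eq_abs] using hC p
        · simp [Set.indicator_of_notMem hp, hF0 p hp]
    -- measurability of the time component
    have hSg_cont : Continuous fun t : ℝ => ∫ s in a..t, σ s := hσ_int.continuous_primitive a
    have hsub : ∀ u t : ℝ, ∫ s in u..t, σ s = (∫ s in a..t, σ s) - ∫ s in a..u, σ s := by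
      intro u t
      rw [intervalIntegral.integral_interval_sub_left hσ_int.intervalIntegrable
        hσ_int.intervalIntegrable]
    have hφtP_meas :
        Measurable fun p : EuclideanSpace ℝ (Fin n) × ℝ => -(D p.1) * ∫ s in (g p.1)..p.2, σ s := by
      have h : (fun p : EuclideanSpace ℝ (Fin n) × ℝ => -(D p.1) * ∫ s in (g p.1)..p.2, σ s)
          = fun p => -(D p.1) * ((∫ s in a..p.2, σ s) - ∫ s in a..(g p.1), σ s) := by
        funext p; rw [hsub]
      rw [h]
      exact ((hD_cont.comp continuous_fst).neg.measurable).mul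
        (((hSg_cont.comp continuous_snd).measurable).sub
          ((hSg_cont.measurable.comp hg_meas).comp measurable_fst))
    -- the pointwise decomposition of the integrand
    have hdecomp : ∀ p : EuclideanSpace ℝ (Fin n) × ℝ,
        fderiv ℝ ψ p (σ p.2 • v p.1, -(D p.1) * ∫ s in (g p.1)..p.2, σ s)
        = (∑ i : Fin n, (σ p.2 * v p.1 i) *
            fderiv ℝ ψ p (EuclideanSpace.single i 1, (0 : ℝ)))
          + (-(D p.1) * ∫ s in (g p.1)..p.2, σ s) *
            fderiv ℝ ψ p ((0 : EuclideanSpace ℝ (Fin n)), (1 : ℝ)) := by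
      intro p
      have hvec : ((σ p.2 • v p.1 : EuclideanSpace ℝ (Fin n)),
            -(D p.1) * ∫ s in (g p.1)..p.2, σ s)
          = (∑ i : Fin n, (σ p.2 * v p.1 i) •
              ((EuclideanSpace.single i 1 : EuclideanSpace ℝ (Fin n)), (0 : ℝ)))
            + (-(D p.1) * ∫ s in (g p.1)..p.2, σ s) •
              ((0 : EuclideanSpace ℝ (Fin n)), (1 : ℝ)) := by
        have h2 : (σ p.2 • v p.1 : EuclideanSpace ℝ (Fin n))
            = ∑ i : Fin n, (σ p.2 * v p.1 i) • EuclideanSpace.single i 1 := by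
          ext j
          rw [WithLp.ofLp_sum, Finset.sum_apply]
          simp [EuclideanSpace.single_apply, mul_comm]
        refine Prod.ext ?_ ?_
        · simp [h2, Prod.fst_sum]
        · simp [Prod.snd_sum]
      rw [hvec, map_add, map_sum]
      simp only [_root_.map_smul, smul_eq_mul, neg_mul]
    simp only [hφx, hφt', hdecomp]
    -- integrability of all pieces
    have intA : ∀ i : Fin n, Integrable fun p : EuclideanSpace ℝ (Fin n) × ℝ =>
        (σ p.2 * v p.1 i) * fderiv ℝ ψ p (EuclideanSpace.single i 1, (0 : ℝ)) := by
      intro i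
      refine keyC _ ?_ fun p hp => by rw [hfψ0 p hp]; simp
      exact ((hσ_cont.comp continuous_snd).mul
        (((EuclideanSpace.proj (𝕜 := ℝ) i).continuous.comp hv_cont).comp continuous_fst)).mul
        (hfψ_cont.clm_apply continuous_const)
    have intJ : Integrable fun p : EuclideanSpace ℝ (Fin n) × ℝ =>
        (-(D p.1) * ∫ s in (g p.1)..p.2, σ s) *
          fderiv ℝ ψ p ((0 : EuclideanSpace ℝ (Fin n)), (1 : ℝ)) := by
      refine key _ ?_ (fun p hp => by rw [hfψ0 p hp]; simp) ?_
      · exact (hφtP_meas.mul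
          (hfψ_cont.clm_apply continuous_const).measurable).aestronglyMeasurable
      · refine ⟨(CD * ∫ s, σ s) * Cψ', fun p => ?_⟩
        rw [abs_mul]
        refine mul_le_mul ?_ ?_ (abs_nonneg _) (mul_nonneg hCD0 hM0)
        · rw [abs_mul, abs_neg]
          exact mul_le_mul (by simpa using hCD p.1) (hIbound _ _) (abs_nonneg _) hCD0
        · calc |fderiv ℝ ψ p (0, 1)| ≤ ‖fderiv ℝ ψ p‖ * ‖((0 : EuclideanSpace ℝ (Fin n)), (1:ℝ))‖ :=
              (fderiv ℝ ψ p).le_opNorm _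
            _ ≤ Cψ' * 1 := by
              refine mul_le_mul (hCψ' p) ?_ (norm_nonneg _) ((norm_nonneg _).trans (hCψ' p))
              simp [Prod.norm_def]
            _ = Cψ' := mul_one _
    rw [integral_add (integrable_finset_sum _ fun i _ => intA i) intJ,
      integral_finset_sum _ fun i _ => intA i]
    -- integration by parts in the direction (eᵢ, 0)
    have hIBP_A : ∀ i : Fin n,
        (∫ p : EuclideanSpace ℝ (Fin n) × ℝ,
          (σ p.2 * v p.1 i) * fderiv ℝ ψ p (EuclideanSpace.single i 1, (0 : ℝ)))
        = -∫ p : EuclideanSpace ℝ (Fin n) × ℝ,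
            (σ p.2 * fderiv ℝ (fun y => v y i) p.1 (EuclideanSpace.single i 1)) * ψ p := by
      intro i
      have hlinef : ∀ p : EuclideanSpace ℝ (Fin n) × ℝ,
          HasLineDerivAt ℝ (fun q : EuclideanSpace ℝ (Fin n) × ℝ => σ q.2 * v q.1 i)
            (σ p.2 * fderiv ℝ (fun y => v y i) p.1 (EuclideanSpace.single i 1)) p
            (EuclideanSpace.single i 1, (0 : ℝ)) := by
        intro p
        refine hasLineDerivAt_of_eq _ _ _ _
          (fun s : ℝ => σ p.2 * v (p.1 + s • EuclideanSpace.single i 1) i) ?_ ?_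
        · apply HasDerivAt.const_mul
          have hline : HasDerivAt (fun s : ℝ => p.1 + s • EuclideanSpace.single i 1)
              (EuclideanSpace.single i 1) 0 := by
            simpa using ((hasDerivAt_id (0 : ℝ)).smul_const
              (EuclideanSpace.single i 1)).const_add p.1
          have h := ((hvi_diff i (p.1 + (0 : ℝ) • EuclideanSpace.single i 1)).hasFDerivAt
            ).comp_hasDerivAt 0 hline
          simpa [Function.comp_def] using h
        · intro s
          simp [Prod.smul_mk]
      have hlineg : ∀ p : EuclideanSpace ℝ (Fin n) × ℝ,
          HasLineDerivAt ℝ ψ (fderiv ℝ ψ p (EuclideanSpace.single i 1, (0 : ℝ))) p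
            (EuclideanSpace.single i 1, (0 : ℝ)) :=
        fun p => (hψ_diff p).hasFDerivAt.hasLineDerivAt _
      refine integral_bilinear_hasLineDerivAt_right_eq_neg_left_of_integrable
        (B := ContinuousLinearMap.mul ℝ ℝ) ?_ ?_ ?_ (fun p _ => hlinef p) (fun p _ => hlineg p)
      · refine keyC _ ?_ fun p hp => by rw [hψ0 p hp]; simp
        exact ((hσ_cont.comp continuous_snd).mul
          ((hDi_cont i).comp continuous_fst)).mul hψ_cont
      · exact intA i
      · refine keyC _ ?_ fun p hp => by rw [hψ0 p hp]; simp
        exact ((hσ_cont.comp continuous_snd).mul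
          (((EuclideanSpace.proj (𝕜 := ℝ) i).continuous.comp hv_cont).comp continuous_fst)).mul
          hψ_cont
    have intA' : ∀ i : Fin n, Integrable fun p : EuclideanSpace ℝ (Fin n) × ℝ =>
        (σ p.2 * fderiv ℝ (fun y => v y i) p.1 (EuclideanSpace.single i 1)) * ψ p := by
      intro i
      refine keyC _ ?_ fun p hp => by rw [hψ0 p hp]; simp
      exact ((hσ_cont.comp continuous_snd).mul ((hDi_cont i).comp continuous_fst)).mul hψ_cont
    have hIBP_J :
        (∫ p : EuclideanSpace ℝ (Fin n) × ℝ,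
          (-(D p.1) * ∫ s in (g p.1)..p.2, σ s) *
            fderiv ℝ ψ p ((0 : EuclideanSpace ℝ (Fin n)), (1 : ℝ)))
        = -∫ p : EuclideanSpace ℝ (Fin n) × ℝ, (-(D p.1) * σ p.2) * ψ p := by
      have hlinef : ∀ p : EuclideanSpace ℝ (Fin n) × ℝ,
          HasLineDerivAt ℝ
            (fun q : EuclideanSpace ℝ (Fin n) × ℝ => -(D q.1) * ∫ s in (g q.1)..q.2, σ s)
            (-(D p.1) * σ p.2) p ((0 : EuclideanSpace ℝ (Fin n)), (1 : ℝ)) := by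
        intro p
        refine hasLineDerivAt_of_eq _ _ _ _
          (fun s : ℝ => -(D p.1) * ∫ s' in (g p.1)..(p.2 + s), σ s') ?_ ?_
        · have H1 : HasDerivAt (fun u : ℝ => ∫ s in (g p.1)..u, σ s) (σ p.2) p.2 :=
            intervalIntegral.integral_hasDerivAt_right hσ_int.intervalIntegrable
              (hσ_cont.stronglyMeasurableAtFilter _ _) hσ_cont.continuousAt
          have H2 : HasDerivAt (fun s : ℝ => p.2 + s) 1 0 := by
            simpa using (hasDerivAt_id (0 : ℝ)).const_add p.2
          have H3 := H1.comp_of_eq 0 H2 (by simp)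
          simpa [Function.comp] using H3.const_mul (-(D p.1))
        · intro s
          simp [Prod.smul_mk]
      have hlineg : ∀ p : EuclideanSpace ℝ (Fin n) × ℝ,
          HasLineDerivAt ℝ ψ
            (fderiv ℝ ψ p ((0 : EuclideanSpace ℝ (Fin n)), (1 : ℝ))) p
            ((0 : EuclideanSpace ℝ (Fin n)), (1 : ℝ)) :=
        fun p => (hψ_diff p).hasFDerivAt.hasLineDerivAt _
      refine integral_bilinear_hasLineDerivAt_right_eq_neg_left_of_integrable
        (B := ContinuousLinearMap.mul ℝ ℝ) ?_ ?_ ?_ (fun p _ => hlinef p) (fun p _ => hlineg p)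
      · refine keyC _ ?_ fun p hp => by rw [hψ0 p hp]; simp
        exact (((hD_cont.comp continuous_fst).neg).mul (hσ_cont.comp continuous_snd)).mul hψ_cont
      · exact intJ
      · refine key _ ?_ (fun p hp => by rw [hψ0 p hp]; simp) ?_
        · exact (hφtP_meas.mul hψ_cont.measurable).aestronglyMeasurable
        · refine ⟨(CD * ∫ s, σ s) * Cψ, fun p => ?_⟩
          show |(-(D p.1) * ∫ s in (g p.1)..p.2, σ s) * ψ p| ≤ (CD * ∫ s, σ s) * Cψ
          rw [abs_mul]
          refine mul_le_mul ?_ (by simpa using hCψ p) (abs_nonneg _) (mul_nonneg hCD0 hM0)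
          rw [abs_mul, abs_neg]
          exact mul_le_mul (by simpa using hCD p.1) (hIbound _ _) (abs_nonneg _) hCD0
    simp only [hIBP_A, hIBP_J]
    have hsum : (∑ i : Fin n, -∫ p : EuclideanSpace ℝ (Fin n) × ℝ,
          (σ p.2 * fderiv ℝ (fun y => v y i) p.1 (EuclideanSpace.single i 1)) * ψ p)
        = -∫ p : EuclideanSpace ℝ (Fin n) × ℝ, (D p.1 * σ p.2) * ψ p := by
      rw [Finset.sum_neg_distrib, ← integral_finset_sum _ fun i _ => intA' i]
      congr 1
      apply integral_congr_ae
      refine Eventually.of_forall fun p => ?_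
      show (∑ i : Fin n,
          (σ p.2 * fderiv ℝ (fun y => v y i) p.1 (EuclideanSpace.single i 1)) * ψ p)
        = (D p.1 * σ p.2) * ψ p
      have hDp : D p.1 = ∑ i : Fin n,
          fderiv ℝ (fun y => v y i) p.1 (EuclideanSpace.single i 1) := rfl
      rw [hDp, Finset.sum_mul, Finset.sum_mul]
      exact Finset.sum_congr rfl fun i _ => by ring
    have hJ : (-∫ p : EuclideanSpace ℝ (Fin n) × ℝ, (-(D p.1) * σ p.2) * ψ p)
        = ∫ p : EuclideanSpace ℝ (Fin n) × ℝ, (D p.1 * σ p.2) * ψ p := by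
      rw [← integral_neg]
      congr 1
      funext p
      ring
    rw [hsum, hJ, neg_add_cancel]
end
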